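/- Let $X$ be a Banach lattice with the disjoint order Banach-Saks property: every norm bounded disjoint sequence in $X$ has a subsequence whose Cesàro sequence order converges in $X$. Then $X$ contains no disjoint positive norm bounded sequence equivalent (as a lattice-ordered basic sequence) to the standard unit vector basis of $\ell^1$; consequently $X^*$ is order continuous. -/

import Mathlib

/-!
Order convergence of the Cesàro means of a positive disjoint sequence `E` bounds them eventually
by some `v`, so `E j / (N + j + 1) ≤ v` for every `j`. These elements are pairwise disjoint, so
their partial sums are suprema and stay below `v`: the harmonically weighted sums
`∑ E j / (N + j + 1)` are norm bounded although their coefficients are not summable. Applied to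
`E = |f ∘ σ|` for a disjoint sequence `f`, this bounds `‖∑ f (σ j) / (N + j + 1)‖`, which is
incompatible with an `ℓ¹` lower estimate, and also with `ε ≤ g (f n)` along a subsequence for a
functional `g`.
-/

open Filter Topology

/-- Cesàro sequence of `f`: `m ↦ (1/(m+1)) ∑_{n=0}^{m} f n`. -/
noncomputable def cesaro {X : Type*} [AddCommGroup X] [Module ℝ X] (f : ℕ → X) (m : ℕ) : X :=
  ((m : ℝ) + 1)⁻¹ • ∑ n ∈ Finset.range (m + 1), f n

/-- Order convergence of a sequence. -/
def OrderConvergesTo {X : Type*} [Lattice X] [AddCommGroup X] (g : ℕ → X) (x : X) : Prop :=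
  ∃ h : ℕ → X, Antitone h ∧ IsGLB (Set.range h) 0 ∧
    ∀ k : ℕ, ∃ N : ℕ, ∀ m ≥ N, |g m - x| ≤ h k

open Finset

section OrderedVectorSpace
variable {X : Type*} [AddCommGroup X] [Lattice X] [IsOrderedAddMonoid X]

lemma nonneg_of_two_pow_nsmul_nonneg {y : X} (k : ℕ) (h : 0 ≤ 2 ^ k • y) : 0 ≤ y := by
  induction k with
  | zero => simpa using h
  | succ k ih => exact ih (nsmul_two_semiclosed (by rwa [← mul_nsmul, ← pow_succ]))

variable [Module ℝ X]

lemma dyadic_smul_nonneg {x : X} (hx : 0 ≤ x) (p k : ℕ) : 0 ≤ ((p : ℝ) / 2 ^ k) • x := by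
  refine nonneg_of_two_pow_nsmul_nonneg k ?_
  rw [← Nat.cast_smul_eq_nsmul ℝ, smul_smul, Nat.cast_pow, Nat.cast_ofNat,
    mul_div_cancel₀ _ (by positivity), Nat.cast_smul_eq_nsmul]
  exact nsmul_nonneg hx p

/-- Compatibility of the order with real scalars is not among the axioms of a normed lattice; it
follows from the closedness of the positive cone, dyadic scalars being handled by
`nsmul_two_semiclosed`. -/
instance posSMulMono_of_orderClosedTopology [TopologicalSpace X] [OrderClosedTopology X]
    [ContinuousSMul ℝ X] : PosSMulMono ℝ X :=
  PosSMulMono.of_smul_nonneg fun t ht x hx => by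
    have hclosed : IsClosed {s : ℝ | 0 ≤ s • x} :=
      isClosed_le continuous_const (continuous_id.smul continuous_const)
    have hlim : Tendsto (fun k : ℕ => (⌊t * 2 ^ k⌋₊ : ℝ) / 2 ^ k) atTop (𝓝 t) :=
      (tendsto_nat_floor_mul_div_atTop ht).comp (tendsto_pow_atTop_atTop_of_one_lt one_lt_two)
    exact hclosed.mem_of_tendsto hlim (Eventually.of_forall fun k => dyadic_smul_nonneg hx _ k)

end OrderedVectorSpace

section LatticeOrderedGroup
variable {X : Type*} [AddCommGroup X] [Lattice X]

lemma abs_smul_le_smul_abs {R : Type*} [Ring R] [PartialOrder R] [Module R X] [PosSMulMono R X]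
    {t : R} (ht : 0 ≤ t) (e : X) : |t • e| ≤ t • |e| :=
  sup_le (smul_le_smul_of_nonneg_left (le_abs_self e) ht)
    (by rw [← smul_neg]; exact smul_le_smul_of_nonneg_left (neg_le_abs e) ht)

variable [IsOrderedAddMonoid X]

lemma inf_add_eq_zero {a b c : X} (hab : a ⊓ b = 0) (hac : a ⊓ c = 0) : a ⊓ (b + c) = 0 := by
  have hc : 0 ≤ c := hac ▸ inf_le_right
  calc a ⊓ (b + c) = a ⊓ ((a + c) ⊓ (b + c)) := by
        rw [← inf_assoc, inf_of_le_left (le_add_of_nonneg_right hc)]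
    _ = 0 := by rw [← inf_add, hab, zero_add, hac]

lemma inf_sum_eq_zero {ι : Type*} {a : X} (ha : 0 ≤ a) {s : Finset ι} {w : ι → X}
    (h : ∀ i ∈ s, a ⊓ w i = 0) : a ⊓ ∑ i ∈ s, w i = 0 := by
  induction s using Finset.cons_induction with
  | empty => simpa using ha
  | cons i s his ih =>
    rw [sum_cons]
    exact inf_add_eq_zero (h i (mem_cons_self i s)) (ih fun j hj => h j (mem_cons_of_mem hj))

lemma sum_le_of_pairwise_inf_eq_zero {ι : Type*} {s : Finset ι} {w : ι → X} {v : X} (hv : 0 ≤ v)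
    (hw0 : ∀ i ∈ s, 0 ≤ w i) (hwv : ∀ i ∈ s, w i ≤ v)
    (hw : (s : Set ι).Pairwise fun i j => w i ⊓ w j = 0) : ∑ i ∈ s, w i ≤ v := by
  induction s using Finset.cons_induction with
  | empty => simpa using hv
  | cons i s his ih =>
    have hs : (s : Set ι) ⊆ cons i s his := coe_subset.2 (subset_cons his)
    have hi : w i ⊓ ∑ j ∈ s, w j = 0 :=
      inf_sum_eq_zero (hw0 i (mem_cons_self i s)) fun j hj =>
        hw (mem_cons_self i s) (hs hj) fun hij => his (hij ▸ hj)
    rw [sum_cons, ← inf_add_sup, hi, zero_add]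
    exact sup_le (hwv i (mem_cons_self i s))
      (ih (fun j hj => hw0 j (hs hj)) (fun j hj => hwv j (hs hj)) (hw.mono hs))

lemma OrderConvergesTo.exists_eventually_le {g : ℕ → X} {x : X} (h : OrderConvergesTo g x) :
    ∃ N : ℕ, ∃ v : X, ∀ m ≥ N, g m ≤ v := by
  obtain ⟨u, -, -, hu⟩ := h
  obtain ⟨N, hN⟩ := hu 0
  exact ⟨N, x + u 0, fun m hm => sub_le_iff_le_add'.1 ((le_abs_self _).trans (hN m hm))⟩

end LatticeOrderedGroup

lemma tendsto_sum_range_inv_add_atTop (N : ℕ) :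
    Tendsto (fun n => ∑ j ∈ range n, ((N + j + 1 : ℕ) : ℝ)⁻¹) atTop atTop := by
  refine (not_summable_iff_tendsto_nat_atTop_of_nonneg fun j => by positivity).1 ?_
  have := (summable_nat_add_iff (f := fun n : ℕ => (n : ℝ)⁻¹) (N + 1)).not.2
    Real.not_summable_natCast_inv
  exact fun hs => this (hs.congr fun j => by rw [show j + (N + 1) = N + j + 1 by omega])

lemma mul_sum_range_inv_add_unbounded {c : ℝ} (hc : 0 < c) (N : ℕ) (C : ℝ) :
    ∃ n, C < c * ∑ j ∈ range n, ((N + j + 1 : ℕ) : ℝ)⁻¹ :=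
  (((tendsto_sum_range_inv_add_atTop N).const_mul_atTop hc).eventually_gt_atTop C).exists

section Cesaro
variable {X : Type*} [AddCommGroup X] [Lattice X] [IsOrderedAddMonoid X] [Module ℝ X]
  [PosSMulMono ℝ X]

lemma cesaro_nonneg {E : ℕ → X} (hE : ∀ n, 0 ≤ E n) (m : ℕ) : 0 ≤ cesaro E m :=
  smul_nonneg (by positivity) (sum_nonneg fun n _ => hE n)

lemma inv_smul_le_cesaro {E : ℕ → X} (hE : ∀ n, 0 ≤ E n) {j m : ℕ} (hjm : j ≤ m) :
    ((m : ℝ) + 1)⁻¹ • E j ≤ cesaro E m :=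
  smul_le_smul_of_nonneg_left
    (single_le_sum (fun n _ => hE n) (mem_range.2 (Nat.lt_succ_of_le hjm))) (by positivity)

lemma sum_range_inv_add_smul_le {E : ℕ → X} (hE : ∀ n, 0 ≤ E n)
    (hdisj : Pairwise fun i j => E i ⊓ E j = 0) {N : ℕ} {v : X}
    (hv : ∀ m ≥ N, cesaro E m ≤ v) (n : ℕ) :
    ∑ j ∈ range n, ((N + j + 1 : ℕ) : ℝ)⁻¹ • E j ≤ v := by
  have hb0 (j : ℕ) : 0 ≤ ((N + j + 1 : ℕ) : ℝ)⁻¹ := by positivity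
  have hb1 (j : ℕ) : ((N + j + 1 : ℕ) : ℝ)⁻¹ ≤ 1 := inv_le_one_of_one_le₀ (by norm_cast; omega)
  refine sum_le_of_pairwise_inf_eq_zero ((cesaro_nonneg hE N).trans (hv N le_rfl))
    (fun j _ => smul_nonneg (hb0 j) (hE j)) (fun j _ => ?_) fun i _ j _ hij => ?_
  · rw [Nat.cast_succ]
    exact (inv_smul_le_cesaro hE (Nat.le_add_left j N)).trans (hv _ (Nat.le_add_right N j))
  · refine le_antisymm ?_ (le_inf (smul_nonneg (hb0 i) (hE i)) (smul_nonneg (hb0 j) (hE j)))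
    exact (inf_le_inf (smul_le_of_le_one_left (hE i) (hb1 i))
      (smul_le_of_le_one_left (hE j) (hb1 j))).trans_eq (hdisj hij)

end Cesaro

lemma l1_lower_bound_comp {X ι κ : Type*} [NormedAddCommGroup X] [Module ℝ X] {f : κ → X} {c : ℝ}
    (h : ∀ (s : Finset κ) (a : κ → ℝ), c * ∑ n ∈ s, |a n| ≤ ‖∑ n ∈ s, a n • f n‖)
    {σ : ι → κ} (hσ : σ.Injective) (s : Finset ι) (a : ι → ℝ) :
    c * ∑ n ∈ s, |a n| ≤ ‖∑ n ∈ s, a n • f (σ n)‖ := by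
  simpa [hσ.extend_apply] using h (s.map ⟨σ, hσ⟩) (Function.extend σ a 0)

section Normed
variable {X : Type*} [NormedAddCommGroup X] [Lattice X] [HasSolidNorm X] [IsOrderedAddMonoid X]
  [NormedSpace ℝ X]

variable (X) in
def DisjointOrderBanachSaks : Prop :=
  ∀ f : ℕ → X, (∃ C : ℝ, ∀ n, ‖f n‖ ≤ C) → (∀ n m, n ≠ m → |f n| ⊓ |f m| = 0) →
    ∃ σ : ℕ → ℕ, StrictMono σ ∧ ∃ x : X, OrderConvergesTo (cesaro (f ∘ σ)) x

lemma norm_sum_range_inv_add_smul_le {e : ℕ → X} (hdisj : Pairwise fun i j => |e i| ⊓ |e j| = 0)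
    {x : X} (hx : OrderConvergesTo (cesaro fun j => |e j|) x) :
    ∃ N : ℕ, ∃ C : ℝ, ∀ n, ‖∑ j ∈ range n, ((N + j + 1 : ℕ) : ℝ)⁻¹ • e j‖ ≤ C := by
  obtain ⟨N, v, hv⟩ := hx.exists_eventually_le
  refine ⟨N, ‖v‖, fun n => norm_le_norm_of_abs_le_abs ?_⟩
  calc |∑ j ∈ range n, ((N + j + 1 : ℕ) : ℝ)⁻¹ • e j|
      ≤ ∑ j ∈ range n, |((N + j + 1 : ℕ) : ℝ)⁻¹ • e j| :=
        le_sum_of_subadditive _ abs_zero.le abs_add_le _ _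
    _ ≤ ∑ j ∈ range n, ((N + j + 1 : ℕ) : ℝ)⁻¹ • |e j| :=
        sum_le_sum fun j _ => abs_smul_le_smul_abs (by positivity) _
    _ ≤ v := sum_range_inv_add_smul_le (fun j => abs_nonneg (e j)) hdisj hv n
    _ ≤ |v| := le_abs_self v

namespace DisjointOrderBanachSaks

lemma exists_subseq_norm_sum_le (hX : DisjointOrderBanachSaks X) {f : ℕ → X}
    (hbdd : ∃ C : ℝ, ∀ n, ‖f n‖ ≤ C) (hdisj : ∀ n m, n ≠ m → |f n| ⊓ |f m| = 0) :
    ∃ σ : ℕ → ℕ, StrictMono σ ∧ ∃ N : ℕ, ∃ C : ℝ,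
      ∀ n, ‖∑ j ∈ range n, ((N + j + 1 : ℕ) : ℝ)⁻¹ • f (σ j)‖ ≤ C := by
  obtain ⟨C, hC⟩ := hbdd
  obtain ⟨σ, hσ, x, hx⟩ := hX (fun n => |f n|) ⟨C, fun n => (norm_abs_eq_norm _).trans_le (hC n)⟩
    fun n m hnm => by simpa only [abs_abs] using hdisj n m hnm
  exact ⟨σ, hσ, norm_sum_range_inv_add_smul_le
    (fun i j hij => hdisj _ _ (hσ.injective.ne hij)) hx⟩

lemma not_l1_lower_bound (hX : DisjointOrderBanachSaks X) {f : ℕ → X} (hf0 : ∀ n, 0 ≤ f n)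
    (hdisj : ∀ n m, n ≠ m → f n ⊓ f m = 0) (hbdd : ∃ C : ℝ, ∀ n, ‖f n‖ ≤ C) {c : ℝ} (hc : 0 < c)
    (hl : ∀ (s : Finset ℕ) (a : ℕ → ℝ), c * ∑ n ∈ s, |a n| ≤ ‖∑ n ∈ s, a n • f n‖) : False := by
  obtain ⟨σ, hσ, N, C, hC⟩ := hX.exists_subseq_norm_sum_le hbdd fun n m hnm => by
    simpa only [abs_of_nonneg (hf0 _)] using hdisj n m hnm
  obtain ⟨n, hn⟩ := mul_sum_range_inv_add_unbounded hc N C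
  have := (l1_lower_bound_comp hl hσ.injective (range n) fun j => ((N + j + 1 : ℕ) : ℝ)⁻¹).trans
    (hC n)
  simp only [abs_inv, Nat.abs_cast] at this
  linarith

lemma eventually_apply_lt (hX : DisjointOrderBanachSaks X) {f : ℕ → X}
    (hbdd : ∃ C : ℝ, ∀ n, ‖f n‖ ≤ C) (hdisj : ∀ n m, n ≠ m → |f n| ⊓ |f m| = 0)
    (g : X →L[ℝ] ℝ) {ε : ℝ} (hε : 0 < ε) : ∀ᶠ n in atTop, g (f n) < ε := by
  simp_rw [← not_le]
  refine not_frequently.1 fun hfreq => ?_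
  obtain ⟨τ, hτ, hτε⟩ := extraction_of_frequently_atTop hfreq
  obtain ⟨C, hC⟩ := hbdd
  obtain ⟨σ, -, N, C', hC'⟩ := hX.exists_subseq_norm_sum_le (f := f ∘ τ) ⟨C, fun n => hC _⟩
    fun n m hnm => hdisj _ _ (hτ.injective.ne hnm)
  obtain ⟨n, hn⟩ := mul_sum_range_inv_add_unbounded hε N (‖g‖ * C')
  refine hn.not_ge ?_
  calc ε * ∑ j ∈ range n, ((N + j + 1 : ℕ) : ℝ)⁻¹
      ≤ ∑ j ∈ range n, ((N + j + 1 : ℕ) : ℝ)⁻¹ * g (f (τ (σ j))) := by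
        rw [mul_sum]
        exact sum_le_sum fun j _ => by
          rw [mul_comm]; exact mul_le_mul_of_nonneg_left (hτε _) (by positivity)
    _ = g (∑ j ∈ range n, ((N + j + 1 : ℕ) : ℝ)⁻¹ • f (τ (σ j))) := by simp
    _ ≤ ‖g‖ * C' := (le_abs_self _).trans ((g.le_opNorm _).trans
        (mul_le_mul_of_nonneg_left (hC' n) (norm_nonneg g)))

lemma tendsto_apply_zero (hX : DisjointOrderBanachSaks X) {f : ℕ → X}
    (hbdd : ∃ C : ℝ, ∀ n, ‖f n‖ ≤ C) (hdisj : ∀ n m, n ≠ m → |f n| ⊓ |f m| = 0)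
    (g : X →L[ℝ] ℝ) : Tendsto (fun n => g (f n)) atTop (𝓝 0) := by
  refine tendsto_order.2 ⟨fun a ha => ?_, fun a ha => hX.eventually_apply_lt hbdd hdisj g ha⟩
  filter_upwards [hX.eventually_apply_lt hbdd hdisj (-g) (neg_pos.2 ha)] with n hn
  simpa using neg_lt.1 hn

end DisjointOrderBanachSaks

end Normed

/-- The order continuity of `X*` is expressed through Meyer-Nieberg's characterization: every norm
bounded disjoint sequence in `X` is weakly null. -/
theorem stmt12_general {X : Type*} [NormedAddCommGroup X] [Lattice X] [HasSolidNorm X] [IsOrderedAddMonoid X] [NormedSpace ℝ X]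
    (hdoBSP : ∀ f : ℕ → X, (∃ C : ℝ, ∀ n, ‖f n‖ ≤ C) →
      (∀ n m, n ≠ m → |f n| ⊓ |f m| = 0) →
      ∃ σ : ℕ → ℕ, StrictMono σ ∧ ∃ x : X, OrderConvergesTo (cesaro (f ∘ σ)) x) :
    (¬ ∃ f : ℕ → X, (∀ n, 0 ≤ f n) ∧ (∀ n m, n ≠ m → f n ⊓ f m = 0) ∧
        (∃ C : ℝ, ∀ n, ‖f n‖ ≤ C) ∧
        (∃ c : ℝ, 0 < c ∧ ∃ C' : ℝ, ∀ (s : Finset ℕ) (a : ℕ → ℝ),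
          c * ∑ n ∈ s, |a n| ≤ ‖∑ n ∈ s, a n • f n‖ ∧
          ‖∑ n ∈ s, a n • f n‖ ≤ C' * ∑ n ∈ s, |a n|)) ∧
    (∀ f : ℕ → X, (∃ C : ℝ, ∀ n, ‖f n‖ ≤ C) → (∀ n m, n ≠ m → |f n| ⊓ |f m| = 0) →
      ∀ g : X →L[ℝ] ℝ, Tendsto (fun n => g (f n)) atTop (𝓝 0)) := by
  have hX : DisjointOrderBanachSaks X := hdoBSP
  refine ⟨?_, fun f hbdd hdisj g => hX.tendsto_apply_zero hbdd hdisj g⟩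
  rintro ⟨f, hf0, hdisj, hbdd, c, hc, _, hl⟩
  exact hX.not_l1_lower_bound hf0 hdisj hbdd hc fun s a => (hl s a).1

/-- If the Banach lattice `X` has the disjoint order Banach–Saks property, then `X` contains
no norm bounded disjoint positive sequence equivalent to the unit vector basis of `ℓ¹`;
consequently `X*` is order continuous (expressed, via Meyer-Nieberg's characterization, as:
every norm bounded disjoint sequence in `X` is weakly null). -/
theorem stmt12 {X : Type*} [NormedAddCommGroup X] [Lattice X] [HasSolidNorm X] [IsOrderedAddMonoid X] [NormedSpace ℝ X] [CompleteSpace X]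
    (hdoBSP : ∀ f : ℕ → X, (∃ C : ℝ, ∀ n, ‖f n‖ ≤ C) →
      (∀ n m, n ≠ m → |f n| ⊓ |f m| = 0) →
      ∃ σ : ℕ → ℕ, StrictMono σ ∧ ∃ x : X, OrderConvergesTo (cesaro (f ∘ σ)) x) :
    (¬ ∃ f : ℕ → X, (∀ n, 0 ≤ f n) ∧ (∀ n m, n ≠ m → f n ⊓ f m = 0) ∧
        (∃ C : ℝ, ∀ n, ‖f n‖ ≤ C) ∧
        (∃ c : ℝ, 0 < c ∧ ∃ C' : ℝ, ∀ (s : Finset ℕ) (a : ℕ → ℝ),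
          c * ∑ n ∈ s, |a n| ≤ ‖∑ n ∈ s, a n • f n‖ ∧
          ‖∑ n ∈ s, a n • f n‖ ≤ C' * ∑ n ∈ s, |a n|)) ∧
    (∀ f : ℕ → X, (∃ C : ℝ, ∀ n, ‖f n‖ ≤ C) → (∀ n m, n ≠ m → |f n| ⊓ |f m| = 0) →
      ∀ g : X →L[ℝ] ℝ, Tendsto (fun n => g (f n)) atTop (𝓝 0)) :=
  stmt12_general hdoBSP
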